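/- arXiv:1510.08212 — 8 statements merged into one kernel-verified Lean document; each statement's English description precedes it below -/
import Mathlib

section
/- Every symplectic Lie algebra admits an affine (left-symmetric) structure: if g is a finite-dimensional Lie algebra over K (K = ℝ or ℂ) admitting a symplectic form θ, then there exists a K-bilinear product (X,Y) ↦ X·Y on g such that X·Y − Y·X = [X,Y] and X·(Y·Z) − (X·Y)·Z = Y·(X·Z) − (Y·X)·Z for all X,Y,Z ∈ g. -/
/-- A symplectic form on a Lie algebra `g` over `K`: a `K`-bilinear form which is
alternating, nondegenerate and closed, i.e.
`θ ⁅X,Y⁆ Z + θ ⁅Y,Z⁆ X + θ ⁅Z,X⁆ Y = 0` for all `X Y Z`. -/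
def IsSymplecticForm (K : Type*) [RCLike K] (g : Type*) [LieRing g] [LieAlgebra K g]
    (θ : g → g → K) : Prop :=
  (∀ (a : K) (X Y Z : g), θ (a • X + Y) Z = a * θ X Z + θ Y Z) ∧
  (∀ (a : K) (X Y Z : g), θ X (a • Y + Z) = a * θ X Y + θ X Z) ∧
  (∀ X : g, θ X X = 0) ∧
  (∀ X : g, (∀ Y : g, θ X Y = 0) → X = 0) ∧
  (∀ X Y Z : g, θ ⁅X, Y⁆ Z + θ ⁅Y, Z⁆ X + θ ⁅Z, X⁆ Y = 0)

/-- Every symplectic Lie algebra admits an affine (left-symmetric) structure. -/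
theorem affine_of_symplectic (K : Type*) [RCLike K] (g : Type*) [LieRing g] [LieAlgebra K g]
    [FiniteDimensional K g] (θ : g → g → K) (hθ : IsSymplecticForm K g θ) :
    ∃ mul : g →ₗ[K] g →ₗ[K] g,
      (∀ X Y : g, mul X Y - mul Y X = ⁅X, Y⁆) ∧
      (∀ X Y Z : g,
        mul X (mul Y Z) - mul (mul X Y) Z = mul Y (mul X Z) - mul (mul Y X) Z) := by
  obtain ⟨h1, h2, halt, hnd, hcl⟩ := hθ
  have hz1 : ∀ Z : g, θ 0 Z = 0 := by
    intro Z
    have h := h1 1 0 0 Z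
    simp only [one_smul, add_zero, one_mul] at h
    linear_combination -h
  have hz2 : ∀ Z : g, θ Z 0 = 0 := by
    intro Z
    have h := h2 1 Z 0 0
    simp only [one_smul, add_zero, one_mul] at h
    linear_combination -h
  have haddl : ∀ X Y Z : g, θ (X + Y) Z = θ X Z + θ Y Z := by
    intro X Y Z; have h := h1 1 X Y Z; simpa using h
  have hsmull : ∀ (a : K) (X Z : g), θ (a • X) Z = a * θ X Z := by
    intro a X Z; have h := h1 a X 0 Z; simpa [hz1] using h
  have haddr : ∀ X Y Z : g, θ X (Y + Z) = θ X Y + θ X Z := by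
    intro X Y Z; have h := h2 1 X Y Z; simpa using h
  have hsmulr : ∀ (a : K) (X Z : g), θ X (a • Z) = a * θ X Z := by
    intro a X Z; have h := h2 a X Z 0; simpa [hz2] using h
  set B : g →ₗ[K] Module.Dual K g :=
    LinearMap.mk₂ K θ (fun m₁ m₂ n => haddl m₁ m₂ n) (fun c m n => hsmull c m n)
      (fun m n₁ n₂ => haddr m n₁ n₂) (fun c m n => hsmulr c m n) with hB
  have hBapp : ∀ X Y : g, B X Y = θ X Y := fun X Y => rfl
  have hanti : ∀ X Y : g, θ X Y = -θ Y X := by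
    intro X Y
    have h := halt (X + Y)
    rw [haddl, haddr, haddr, halt, halt] at h
    linear_combination h
  have hinj : Function.Injective B := by
    intro X Y h
    have hsub : ∀ Z : g, θ (X - Y) Z = 0 := by
      intro Z
      have hXY : θ X Z = θ Y Z := LinearMap.congr_fun h Z
      calc θ (X - Y) Z = B (X - Y) Z := rfl
        _ = B X Z - B Y Z := by rw [map_sub]; rfl
        _ = 0 := by rw [hBapp, hBapp, hXY]; ring
    exact sub_eq_zero.mp (hnd (X - Y) hsub)
  have hsurj : Function.Surjective B :=
    (LinearMap.injective_iff_surjective_of_finrank_eq_finrank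
      (Subspace.dual_finrank_eq (K := K) (V := g)).symm).mp hinj
  set e : g ≃ₗ[K] Module.Dual K g := LinearEquiv.ofBijective B ⟨hinj, hsurj⟩ with he
  set c : g →ₗ[K] g →ₗ[K] Module.Dual K g :=
    LinearMap.mk₂ K (fun X Y => -((B Y).comp (LieAlgebra.ad K g X)))
      (by intro X₁ X₂ Y; ext Z; simp; ring)
      (by intro a X Y; ext Z; simp)
      (by intro X Y₁ Y₂; ext Z; simp; ring)
      (by intro a X Y; ext Z; simp) with hc
  set mul : g →ₗ[K] g →ₗ[K] g := c.compr₂ (e.symm : Module.Dual K g →ₗ[K] g) with hmul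
  have hmulapp : ∀ X Y : g, mul X Y = e.symm (c X Y) := fun X Y => rfl
  have hkey : ∀ X Y Z : g, θ (mul X Y) Z = -θ Y ⁅X, Z⁆ := by
    intro X Y Z
    have h : B (mul X Y) = c X Y := by
      rw [hmulapp]; exact e.apply_symm_apply (c X Y)
    calc θ (mul X Y) Z = B (mul X Y) Z := rfl
      _ = c X Y Z := by rw [h]
      _ = -θ Y ⁅X, Z⁆ := rfl
  have hsubl : ∀ X Y Z : g, θ (X - Y) Z = θ X Z - θ Y Z := by
    intro X Y Z
    calc θ (X - Y) Z = B (X - Y) Z := rfl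
      _ = B X Z - B Y Z := by rw [map_sub]; rfl
      _ = θ X Z - θ Y Z := rfl
  have hsubr : ∀ X Y Z : g, θ X (Y - Z) = θ X Y - θ X Z := by
    intro X Y Z
    calc θ X (Y - Z) = B X (Y - Z) := rfl
      _ = B X Y - B X Z := by rw [map_sub]
      _ = θ X Y - θ X Z := rfl
  have hnegr : ∀ X Y : g, θ X (-Y) = -θ X Y := by
    intro X Y
    calc θ X (-Y) = B X (-Y) := rfl
      _ = -(B X Y) := by rw [map_neg]
      _ = -θ X Y := rfl
  have hflat : ∀ X Y : g, mul X Y - mul Y X = ⁅X, Y⁆ := by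
    intro X Y
    have h0 : ∀ W : g, θ (mul X Y - mul Y X - ⁅X, Y⁆) W = 0 := by
      intro W
      rw [hsubl, hsubl, hkey, hkey]
      have c1 := hcl X Y W
      have a1 := hanti ⁅Y, W⁆ X
      have a2 := hanti ⁅W, X⁆ Y
      have b1 : θ Y ⁅W, X⁆ = -θ Y ⁅X, W⁆ := by
        rw [← lie_skew X W, hnegr, neg_neg]
      linear_combination -c1 + a1 + a2 - b1
    exact sub_eq_zero.mp (hnd _ h0)
  refine ⟨mul, hflat, ?_⟩
  intro X Y Z
  have h0 : ∀ W : g,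
      θ (mul X (mul Y Z) - mul (mul X Y) Z - (mul Y (mul X Z) - mul (mul Y X) Z)) W = 0 := by
    intro W
    rw [hsubl, hsubl, hsubl]
    have t1 : θ (mul X (mul Y Z)) W = θ Z ⁅Y, ⁅X, W⁆⁆ := by
      rw [hkey X (mul Y Z) W, hkey Y Z ⁅X, W⁆]; ring
    have t2 : θ (mul (mul X Y) Z) W = -θ Z ⁅mul X Y, W⁆ := hkey _ _ _
    have t3 : θ (mul Y (mul X Z)) W = θ Z ⁅X, ⁅Y, W⁆⁆ := by
      rw [hkey Y (mul X Z) W, hkey X Z ⁅Y, W⁆]; ring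
    have t4 : θ (mul (mul Y X) Z) W = -θ Z ⁅mul Y X, W⁆ := hkey _ _ _
    have hbr : θ Z ⁅mul X Y, W⁆ - θ Z ⁅mul Y X, W⁆ = θ Z ⁅(⁅X, Y⁆ : g), W⁆ := by
      have hd : (⁅mul X Y, W⁆ : g) - ⁅mul Y X, W⁆ = ⁅(⁅X, Y⁆ : g), W⁆ := by
        rw [← sub_lie, hflat]
      rw [← hsubr, hd]
    have hjac : θ Z ⁅Y, ⁅X, W⁆⁆ - θ Z ⁅X, ⁅Y, W⁆⁆ = -θ Z ⁅(⁅X, Y⁆ : g), W⁆ := by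
      have hj : (⁅Y, ⁅X, W⁆⁆ : g) - ⁅X, ⁅Y, W⁆⁆ = -⁅(⁅X, Y⁆ : g), W⁆ := by
        rw [lie_lie]; abel
      rw [← hsubr, hj, hnegr]
    linear_combination t1 - t2 - t3 + t4 + hbr + hjac
  exact sub_eq_zero.mp (hnd _ h0)
end

section
/- If (g,θ,B) is a symplectic quadratic Lie algebra, then there exists a derivation D of g which is invertible, B-skew-symmetric (i.e. B(D(X),Y) = −B(X,D(Y)) for all X,Y), and satisfies θ(X,Y) = B(D(X),Y) for all X,Y ∈ g. -/
section Aux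

variable {K : Type*} [RCLike K] {g : Type*} [LieRing g] [LieAlgebra K g]

/-- Package a bilinear form given in the "affine" style into a `LinearMap.mk₂`-style map. -/
theorem aux_zero_left (B : g → g → K)
    (hB₁ : ∀ (a : K) (X Y Z : g), B (a • X + Y) Z = a * B X Z + B Y Z) (Z : g) :
    B 0 Z = 0 := by
  have h := hB₁ 1 0 0 Z
  simp only [one_smul, add_zero, one_mul] at h
  exact (left_eq_add.mp h)

theorem aux_add_left (B : g → g → K)
    (hB₁ : ∀ (a : K) (X Y Z : g), B (a • X + Y) Z = a * B X Z + B Y Z) (X Y Z : g) :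
    B (X + Y) Z = B X Z + B Y Z := by
  have h := hB₁ 1 X Y Z
  simpa using h

theorem aux_smul_left (B : g → g → K)
    (hB₁ : ∀ (a : K) (X Y Z : g), B (a • X + Y) Z = a * B X Z + B Y Z) (a : K) (X Z : g) :
    B (a • X) Z = a * B X Z := by
  have h := hB₁ a X 0 Z
  rw [add_zero, aux_zero_left B hB₁, add_zero] at h
  exact h

end Aux

/-- If `(g, θ, B)` is a symplectic quadratic Lie algebra then there exists an invertible
`B`-skew-symmetric derivation `D` of `g` with `θ X Y = B (D X) Y` for all `X`, `Y`. -/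
theorem exists_invertible_skew_derivation_of_symplectic_quadratic
    (K : Type*) [RCLike K] (g : Type*) [LieRing g] [LieAlgebra K g] [FiniteDimensional K g]
    (θ : g → g → K) (hθ : IsSymplecticForm K g θ)
    (B : g → g → K)
    (hB₁ : ∀ (a : K) (X Y Z : g), B (a • X + Y) Z = a * B X Z + B Y Z)
    (hB₂ : ∀ (a : K) (X Y Z : g), B X (a • Y + Z) = a * B X Y + B X Z)
    (hBsymm : ∀ X Y : g, B X Y = B Y X)
    (hBnondeg : ∀ X : g, (∀ Y : g, B X Y = 0) → X = 0)
    (hBinv : ∀ X Y Z : g, B ⁅X, Y⁆ Z = B X ⁅Y, Z⁆) :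
    ∃ D : g →ₗ[K] g,
      (∀ X Y : g, D ⁅X, Y⁆ = ⁅D X, Y⁆ + ⁅X, D Y⁆) ∧
      Function.Bijective D ∧
      (∀ X Y : g, B (D X) Y = - B X (D Y)) ∧
      (∀ X Y : g, θ X Y = B (D X) Y) := by
  obtain ⟨hθ₁, hθ₂, hθalt, hθnd, hθcl⟩ := hθ
  -- linearity facts
  have hBadd₁ := aux_add_left B hB₁
  have hBsmul₁ := aux_smul_left B hB₁
  have hθadd₁ := aux_add_left θ hθ₁
  have hθsmul₁ := aux_smul_left θ hθ₁
  have hBadd₂ : ∀ X Y Z : g, B X (Y + Z) = B X Y + B X Z := fun X Y Z => by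
    rw [hBsymm, hBadd₁, hBsymm Y X, hBsymm Z X]
  have hBsmul₂ : ∀ (a : K) (X Y : g), B X (a • Y) = a * B X Y := fun a X Y => by
    rw [hBsymm, hBsmul₁, hBsymm Y X]
  -- θ is antisymmetric
  have hθanti : ∀ X Y : g, θ X Y = - θ Y X := by
    intro X Y
    have h := hθcl X Y Y
    have h2 := hθ₂ 1 X Y Y
    -- use alternating on X+Y instead: expand θ (X+Y) (X+Y) = 0
    have e : θ (X + Y) (X + Y) = θ X Y + θ Y X := by
      have e1 := hθadd₁ X Y (X + Y)
      have e2 := hθ₂ 1 X X Y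
      have e3 := hθ₂ 1 Y X Y
      simp only [one_smul, one_mul] at e2 e3
      rw [e1, e2, e3, hθalt X, hθalt Y]
      ring
    rw [hθalt] at e
    linear_combination -e
  -- the linear equiv Φ : g ≃ Dual g given by B
  let Bb : g →ₗ[K] g →ₗ[K] K := LinearMap.mk₂ K B hBadd₁ hBsmul₁ hBadd₂ hBsmul₂
  have hBbinj : Function.Injective Bb := by
    rw [injective_iff_map_eq_zero]
    intro X hX
    exact hBnondeg X fun Y => congrFun (congrArg DFunLike.coe hX) Y
  let Φ : g ≃ₗ[K] Module.Dual K g :=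
    LinearEquiv.ofBijective Bb ⟨hBbinj, by
      have : FiniteDimensional K (Module.Dual K g) := inferInstance
      exact (LinearMap.injective_iff_surjective_of_finrank_eq_finrank
        (Subspace.dual_finrank_eq (K := K) (V := g)).symm).mp hBbinj⟩
  -- the linear map Θ : g → Dual g given by θ
  have hθadd₂ : ∀ X Y Z : g, θ X (Y + Z) = θ X Y + θ X Z := fun X Y Z => by
    have h := hθ₂ 1 X Y Z; simpa using h
  have hθsmul₂ : ∀ (a : K) (X Y : g), θ X (a • Y) = a * θ X Y := by
    intro a X Y
    have h := hθ₂ a X Y 0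
    have h0 : θ X 0 = 0 := by
      have := hθ₂ 1 X 0 0; simpa [left_eq_add] using this
    rw [add_zero, h0, add_zero] at h
    exact h
  let Θ : g →ₗ[K] Module.Dual K g := LinearMap.mk₂ K θ hθadd₁ hθsmul₁ hθadd₂ hθsmul₂
  -- define D
  let D : g →ₗ[K] g := Φ.symm.toLinearMap ∘ₗ Θ
  have hkey : ∀ X Y : g, B (D X) Y = θ X Y := by
    intro X Y
    have : Bb (D X) = Θ X := by
      show Φ (Φ.symm (Θ X)) = Θ X
      exact Φ.apply_symm_apply _
    exact congrFun (congrArg DFunLike.coe this) Y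
  refine ⟨D, ?_, ?_, ?_, fun X Y => (hkey X Y).symm⟩
  · -- derivation
    intro X Y
    have hdiff : ∀ W W' : g, (∀ Z, B W Z = B W' Z) → W = W' := by
      intro W W' h
      have : W - W' = 0 := hBnondeg _ (fun Z => by
        have e : B (W - W') Z = B W Z - B W' Z := by
          have := hBadd₁ W' (W - W') Z
          rw [add_sub_cancel] at this
          linear_combination -this
        rw [e, h Z, sub_self])
      exact sub_eq_zero.mp this
    apply hdiff
    intro Z
    have e1 : B (D ⁅X, Y⁆) Z = θ ⁅X, Y⁆ Z := hkey _ _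
    have e2 : B (⁅D X, Y⁆ + ⁅X, D Y⁆) Z = θ X ⁅Y, Z⁆ - θ Y ⁅X, Z⁆ := by
      rw [hBadd₁]
      have a1 : B ⁅D X, Y⁆ Z = θ X ⁅Y, Z⁆ := by rw [hBinv]; exact hkey _ _
      have a2 : B ⁅X, D Y⁆ Z = - θ Y ⁅X, Z⁆ := by
        have : (⁅X, D Y⁆ : g) = ((-1 : K)) • ⁅D Y, X⁆ := by
          rw [neg_smul, one_smul, ← lie_skew]
        rw [this, hBsmul₁, hBinv, hkey]
        ring
      rw [a1, a2]; ring
    rw [e1, e2]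
    have c := hθcl X Y Z
    have r1 : θ X ⁅Y, Z⁆ = - θ ⁅Y, Z⁆ X := hθanti _ _
    have r2 : θ Y ⁅X, Z⁆ = - θ ⁅X, Z⁆ Y := hθanti _ _
    have r3 : (⁅X, Z⁆ : g) = ((-1 : K)) • ⁅Z, X⁆ := by rw [neg_smul, one_smul, ← lie_skew]
    have r4 : θ ⁅X, Z⁆ Y = - θ ⁅Z, X⁆ Y := by rw [r3, hθsmul₁]; ring
    linear_combination c - r1 + r2 - r4
  · -- bijective
    have hinj : Function.Injective D := by
      rw [injective_iff_map_eq_zero]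
      intro X hX
      apply hθnd X
      intro Y
      rw [← hkey X Y, hX, aux_zero_left B hB₁]
    exact ⟨hinj, (LinearMap.injective_iff_surjective).mp hinj⟩
  · -- skew
    intro X Y
    rw [hkey X Y, hθanti, ← hkey Y X, hBsymm]
end

section
/- Let (V,[·,·]) be a finite-dimensional real Lie algebra with symplectic form θ, let f : (0,1] → GL(V), and define [x,y]_ε = f(ε)([f(ε)⁻¹(x), f(ε)⁻¹(y)]). Suppose the limit [x,y]₀ = lim_{ε→0⁺} [x,y]_ε exists for all x,y ∈ V (so that [·,·]₀ is a Lie bracket on V, the contraction of [·,·]). If there exists k such that θ(f(ε)(x), f(ε)(y)) = ε^k · θ(x,y) for all ε ∈ (0,1] and all x,y ∈ V, then θ is also a symplectic form on the contracted Lie algebra (V,[·,·]₀). -/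
/-!
Only closedness involves the bracket. By the scaling hypothesis, the cyclic sum
`θ ⁅X,Y⁆_ε Z + θ ⁅Y,Z⁆_ε X + θ ⁅Z,X⁆_ε Y` of the conjugated bracket is `ε ^ k` times the cyclic
sum of the original bracket at `(f ε)⁻¹ X, (f ε)⁻¹ Y, (f ε)⁻¹ Z`, hence `0`. Since `θ` is linear,
hence continuous, on the finite-dimensional space `V`, these sums converge to the cyclic sum of
`⁅·,·⁆₀`, which is therefore `0` as well.
-/

/-- A symplectic form on a vector space `g` with respect to a (not necessarily Lie) bracket
`mu`: bilinear, alternating, nondegenerate and closed with respect to `mu`. -/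
def IsSymplecticFormWrt (g : Type*) [AddCommGroup g] [Module ℝ g]
    (mu : g → g → g) (θ : g → g → ℝ) : Prop :=
  (∀ (a : ℝ) (X Y Z : g), θ (a • X + Y) Z = a * θ X Z + θ Y Z) ∧
  (∀ (a : ℝ) (X Y Z : g), θ X (a • Y + Z) = a * θ X Y + θ X Z) ∧
  (∀ X : g, θ X X = 0) ∧
  (∀ X : g, (∀ Y : g, θ X Y = 0) → X = 0) ∧
  (∀ X Y Z : g, θ (mu X Y) Z + θ (mu Y Z) X + θ (mu Z X) Y = 0)

open Filter Topology Set

def cyclicBracketSum {V R : Type*} [Add R] (mu : V → V → V) (θ : V → V → R) (X Y Z : V) : R :=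
  θ (mu X Y) Z + θ (mu Y Z) X + θ (mu Z X) Y

theorem cyclicBracketSum_conj {V R : Type*} [Semiring R] (mu : V → V → V) (θ : V → V → R)
    (e : V ≃ V) {c : R} (he : ∀ x y, θ (e x) (e y) = c * θ x y) (X Y Z : V) :
    cyclicBracketSum (fun x y => e (mu (e.symm x) (e.symm y))) θ X Y Z =
      c * cyclicBracketSum mu θ (e.symm X) (e.symm Y) (e.symm Z) := by
  have hθe : ∀ x y, θ (e x) y = c * θ x (e.symm y) := fun x y => by
    rw [← he, e.apply_symm_apply]
  simp only [cyclicBracketSum, hθe, mul_add]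

theorem tendsto_cyclicBracketSum {V R ι : Type*} [TopologicalSpace V] [TopologicalSpace R]
    [Add R] [ContinuousAdd R] {l : Filter ι} (θ : V → V → R)
    (hθ : ∀ Z, Continuous (θ · Z)) (mu : ι → V → V → V) (mu₀ : V → V → V)
    (hlim : ∀ x y, Tendsto (fun i => mu i x y) l (𝓝 (mu₀ x y))) (X Y Z : V) :
    Tendsto (fun i => cyclicBracketSum (mu i) θ X Y Z) l (𝓝 (cyclicBracketSum mu₀ θ X Y Z)) :=
  ((((hθ Z).tendsto _).comp (hlim X Y)).add (((hθ X).tendsto _).comp (hlim Y Z))).add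
    (((hθ Y).tendsto _).comp (hlim Z X))

theorem continuous_of_map_smul_add {V : Type*} [AddCommGroup V] [Module ℝ V]
    [FiniteDimensional ℝ V] [TopologicalSpace V] [IsTopologicalAddGroup V] [ContinuousSMul ℝ V]
    [T2Space V] {g : V → ℝ} (hg : ∀ (a : ℝ) (X Y : V), g (a • X + Y) = a * g X + g Y) :
    Continuous g := by
  have hg0 : g 0 = 0 := by simpa using hg 1 0 0
  let L : V →ₗ[ℝ] ℝ :=
    { toFun := g
      map_add' := fun x y => by simpa using hg 1 x y
      map_smul' := fun a x => by simpa [hg0] using hg a x 0 }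
  exact L.continuous_of_finiteDimensional

/-- If `(V, ⁅·,·⁆)` is a finite-dimensional real symplectic Lie algebra with symplectic form
`θ`, `f : (0,1] → GL(V)`, the contracted bracket `⁅x,y⁆₀ = lim_{ε→0⁺} f ε ⁅(f ε)⁻¹ x, (f ε)⁻¹ y⁆`
exists, and `θ (f ε x) (f ε y) = ε ^ k * θ x y` for some `k` and all `ε ∈ (0,1]`, then `θ` is
also a symplectic form on the contracted Lie algebra `(V, ⁅·,·⁆₀)`. -/
theorem symplectic_of_contraction_of_scaling
    (V : Type*) [LieRing V] [LieAlgebra ℝ V] [FiniteDimensional ℝ V]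
    [TopologicalSpace V] [IsTopologicalAddGroup V] [ContinuousSMul ℝ V] [T2Space V]
    (θ : V → V → ℝ) (hθ : IsSymplecticFormWrt V (fun X Y => ⁅X, Y⁆) θ)
    (f : ℝ → (V ≃ₗ[ℝ] V)) (mu₀ : V → V → V)
    (hlim : ∀ x y : V,
      Filter.Tendsto (fun ε : ℝ => f ε ⁅(f ε).symm x, (f ε).symm y⁆)
        (nhdsWithin 0 (Set.Ioc (0:ℝ) 1)) (nhds (mu₀ x y)))
    (k : ℤ)
    (hk : ∀ ε ∈ Set.Ioc (0:ℝ) 1, ∀ x y : V, θ (f ε x) (f ε y) = ε ^ k * θ x y) :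
    IsSymplecticFormWrt V mu₀ θ := by
  obtain ⟨hlin_left, hlin_right, halt, hnondeg, hclosed⟩ := hθ
  refine ⟨hlin_left, hlin_right, halt, hnondeg, fun X Y Z => ?_⟩
  have : (𝓝[Ioc (0:ℝ) 1] 0).NeBot := by
    rw [nhdsWithin_Ioc_eq_nhdsGT one_pos]
    infer_instance
  have hθc : ∀ Z, Continuous (θ · Z) := fun Z =>
    continuous_of_map_smul_add fun a X Y => hlin_left a X Y Z
  refine tendsto_nhds_unique_of_eventuallyEq
    (tendsto_cyclicBracketSum θ hθc _ mu₀ hlim X Y Z) tendsto_const_nhds ?_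
  filter_upwards [self_mem_nhdsWithin] with ε hε
  exact (cyclicBracketSum_conj _ θ (f ε).toEquiv (hk ε hε) X Y Z).trans
    (mul_eq_zero_of_right _ (hclosed _ _ _))
end

section
/- If g is a finite-dimensional symplectic Lie algebra, then dim C_j(g) + dim C^j(g) ≤ dim g for all j ≥ 0, where C^j(g) is the lower central series (C⁰(g) = g, C^j(g) = [g, C^{j−1}(g)]) and C_j(g) is the upper central series (C₀(g) = 0, C_j(g) = {X ∈ g : [X,g] ⊆ C_{j−1}(g)}). -/
/-!
Write `C^j` for the lower and `C_j` for the upper central series. Since `⁅C^a, C_{b+a+1}⁆ ⊆ C_b`,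
the closedness identity `θ ⁅u,n⁆ x = -θ ⁅n,x⁆ u - θ ⁅x,u⁆ n` shows by induction on `j` that `C^j`
is `θ`-orthogonal to `C_j`: for `n ∈ C^j` and `x ∈ C_{j+1}` the first term vanishes because
`⁅n,x⁆ = 0`, the second by induction because `⁅x,u⁆ ∈ C_j` (orthogonality is symmetric as `θ` is
alternating). So `C_j ⊆ (C^j)^⊥`, and nondegeneracy gives `dim (C^j)^⊥ = dim g - dim C^j`.
-/

open LieModule LieSubmodule Module

theorem isLinearMap_of_map_smul_add {R M M₂ : Type*} [Semiring R] [AddCommMonoid M]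
    [AddCancelCommMonoid M₂] [Module R M] [Module R M₂] {f : M → M₂}
    (h : ∀ (a : R) (x y : M), f (a • x + y) = a • f x + f y) : IsLinearMap R f := by
  have hzero : f 0 = 0 := by simpa using h 1 0 0
  exact ⟨fun x y => by simpa using h 1 x y, fun a x => by simpa [hzero] using h a x 0⟩

theorem LieSubmodule.lie_mem_ucs_of_mem_lowerCentralSeries {R L M : Type*} [CommRing R]
    [LieRing L] [LieAlgebra R L] [AddCommGroup M] [Module R M] [LieRingModule L M]
    [LieModule R L M] (N : LieSubmodule R L M) {a b : ℕ} {y : L} {m : M}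
    (hy : y ∈ lowerCentralSeries R L L a) (hm : m ∈ N.ucs (b + a + 1)) : ⁅y, m⁆ ∈ N.ucs b := by
  induction a generalizing b y m with
  | zero =>
    rw [ucs_succ] at hm
    exact (mem_normalizer _ m).mp hm y
  | succ a ih =>
    rw [lowerCentralSeries_succ, ← mem_toSubmodule, lieIdeal_oper_eq_linear_span'] at hy
    induction hy using Submodule.span_induction with
    | mem z hz =>
      obtain ⟨u, -, n, hn, rfl⟩ := hz
      have hum : ⁅u, m⁆ ∈ N.ucs (b + a + 1) := by
        rw [show b + (a + 1) + 1 = b + a + 1 + 1 by omega, ucs_succ] at hm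
        exact (mem_normalizer _ m).mp hm u
      have hnm : ⁅n, m⁆ ∈ N.ucs (b + 1) :=
        ih (b := b + 1) hn (by rwa [show b + 1 + a + 1 = b + (a + 1) + 1 by omega])
      rw [lie_lie]
      refine sub_mem ?_ (ih hn hum)
      rw [ucs_succ] at hnm
      exact (mem_normalizer _ _).mp hnm u
    | zero => simp
    | add z w _ _ hz hw => rw [add_lie]; exact add_mem hz hw
    | smul c z _ hz => rw [smul_lie]; exact Submodule.smul_mem _ c hz

theorem LinearMap.BilinForm.ucs_le_orthogonal_lowerCentralSeries {R L : Type*} [CommRing R]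
    [LieRing L] [LieAlgebra R L] (B : LinearMap.BilinForm R L)
    (hB : B.IsRefl) (hclosed : ∀ X Y Z : L, B ⁅X, Y⁆ Z + B ⁅Y, Z⁆ X + B ⁅Z, X⁆ Y = 0)
    (j : ℕ) :
    ((⊥ : LieIdeal R L).ucs j).toSubmodule ≤
      B.orthogonal (lowerCentralSeries R L L j).toSubmodule := by
  induction j with
  | zero =>
    intro x hx
    simp_all
  | succ j ih =>
    intro x hx y hy
    rw [mem_toSubmodule, lowerCentralSeries_succ, ← mem_toSubmodule,
      lieIdeal_oper_eq_linear_span'] at hy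
    induction hy using Submodule.span_induction with
    | mem z hz =>
      obtain ⟨u, -, n, hn, rfl⟩ := hz
      have hnx : ⁅n, x⁆ = 0 := by
        simpa using (⊥ : LieIdeal R L).lie_mem_ucs_of_mem_lowerCentralSeries (b := 0) hn
          (by simpa using hx)
      have hxu : ⁅x, u⁆ ∈ (⊥ : LieIdeal R L).ucs j := by
        rw [mem_toSubmodule, ucs_succ] at hx
        rw [← lie_skew]
        exact neg_mem ((mem_normalizer _ x).mp hx u)
      simpa [hnx, hB _ _ (ih hxu n hn)] using hclosed u n x
    | zero => simp
    | add z w _ _ hz hw => simp_all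
    | smul c z _ hz => simp_all

theorem LinearMap.BilinForm.finrank_add_finrank_le_of_le_orthogonal {K V : Type*} [Field K]
    [AddCommGroup V] [Module K V] [FiniteDimensional K V] {B : LinearMap.BilinForm K V}
    (hB : B.SeparatingLeft) {U W : Submodule K V} (h : U ≤ B.orthogonal W) :
    finrank K U + finrank K W ≤ finrank K V := by
  have hdim := B.finrank_add_finrank_orthogonal' W
  rw [LinearMap.separatingLeft_iff_ker_eq_bot.mp hB, inf_bot_eq, finrank_bot, add_zero] at hdim
  have := Submodule.finrank_mono h
  omega

namespace IsSymplecticForm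

variable {K : Type*} [RCLike K] {g : Type*} [LieRing g] [LieAlgebra K g] {θ : g → g → K}

def toBilinForm (hθ : IsSymplecticForm K g θ) : LinearMap.BilinForm K g :=
  have hl (Z : g) : IsLinearMap K (θ · Z) :=
    isLinearMap_of_map_smul_add fun a X Y => hθ.1 a X Y Z
  have hr (X : g) : IsLinearMap K (θ X) := isLinearMap_of_map_smul_add (hθ.2.1 · X)
  LinearMap.mk₂ K θ (fun X Y Z => (hl Z).map_add X Y) (fun a X Z => (hl Z).map_smul a X)
    (fun X Y Z => (hr X).map_add Y Z) (fun a X Z => (hr X).map_smul a Z)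

theorem isAlt_toBilinForm (hθ : IsSymplecticForm K g θ) : hθ.toBilinForm.IsAlt :=
  hθ.2.2.1

theorem separatingLeft_toBilinForm (hθ : IsSymplecticForm K g θ) :
    hθ.toBilinForm.SeparatingLeft :=
  hθ.2.2.2.1

end IsSymplecticForm

/-- If `g` is a finite-dimensional symplectic Lie algebra then
`dim C_j(g) + dim C^j(g) ≤ dim g` for all `j ≥ 0`, where `C^j(g)` is the lower central
series and `C_j(g)` is the upper central series. -/
theorem finrank_ucs_add_finrank_lcs_le_of_symplectic
    (K : Type*) [RCLike K] (g : Type*) [LieRing g] [LieAlgebra K g] [FiniteDimensional K g]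
    (θ : g → g → K) (hθ : IsSymplecticForm K g θ) (j : ℕ) :
    Module.finrank K ↥(LieSubmodule.ucs j (⊥ : LieIdeal K g)) +
      Module.finrank K ↥(LieModule.lowerCentralSeries K g g j) ≤ Module.finrank K g := by
  set B := hθ.toBilinForm
  have hclosed : ∀ X Y Z : g, B ⁅X, Y⁆ Z + B ⁅Y, Z⁆ X + B ⁅Z, X⁆ Y = 0 := hθ.2.2.2.2
  exact B.finrank_add_finrank_le_of_le_orthogonal hθ.separatingLeft_toBilinForm
    (B.ucs_le_orthogonal_lowerCentralSeries hθ.isAlt_toBilinForm.isRefl hclosed j)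
end

section
/- Every 4-dimensional 2-step nilpotent Lie algebra over K (K = ℝ or ℂ) admits a symplectic form. -/
/-- A Lie algebra is 2-step nilpotent if `[[g,g],g] = 0` and `[g,g] ≠ 0`. -/
def IsTwoStepNilpotent (g : Type*) [LieRing g] : Prop :=
  (∀ X Y Z : g, ⁅⁅X, Y⁆, Z⁆ = 0) ∧ ∃ X Y : g, ⁅X, Y⁆ ≠ 0


/-! If `W = ⁅X, Y⁆ ≠ 0`, every bracket is a multiple of `W`: otherwise `X, Y, ⁅U, V⁆, W` would be a
basis with two central vectors, and then all brackets would be multiples of `⁅X, Y⁆ = W`.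
So `ad X` and `ad Y` have rank at most one, their common kernel contains some `Z ∉ K ∙ W`, and in
the basis `X, Y, Z, W` the algebra is `𝔥₃ ⊕ K`. There `e⁰ ∧ e³ + e¹ ∧ e²` is symplectic: it is
closed because `e⁰, e¹, e²` are closed and `de³` is a multiple of `e⁰ ∧ e¹`. -/

open LieAlgebra Module

section
variable {K g : Type*} [Field K] [LieRing g] [LieAlgebra K g]

lemma lie_eq_smul_lie_of_mem_center (b : Basis (Fin 4) K g) (h2 : b 2 ∈ center K g)
    (h3 : b 3 ∈ center K g) (X Y : g) :
    ⁅X, Y⁆ = (b.repr X 0 * b.repr Y 1 - b.repr X 1 * b.repr Y 0) • ⁅b 0, b 1⁆ := by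
  rw [LieModule.mem_maxTrivSubmodule] at h2 h3
  have h2' (y : g) : ⁅b 2, y⁆ = 0 := by rw [← lie_skew, h2, neg_zero]
  have h3' (y : g) : ⁅b 3, y⁆ = 0 := by rw [← lie_skew, h3, neg_zero]
  conv_lhs => rw [← b.sum_repr X, ← b.sum_repr Y]
  simp only [Fin.sum_univ_four, add_lie, lie_add, smul_lie, lie_smul, h2, h3, h2', h3', lie_self,
    smul_zero, add_zero, zero_add, ← lie_skew (b 1) (b 0), smul_neg]
  module

lemma linearIndependent_cons_cons_of_lie_ne_zero {n : ℕ} {X Y : g} (hXY : ⁅X, Y⁆ ≠ 0)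
    {v : Fin n → g} (hv : LinearIndependent K v) (hvX : ∀ i, ⁅X, v i⁆ = 0)
    (hvY : ∀ i, ⁅Y, v i⁆ = 0) :
    LinearIndependent K (Fin.cons X (Fin.cons Y v : Fin (n + 1) → g) : Fin (n + 2) → g) := by
  have hspan :
      Submodule.span K (Set.range v) ≤ LinearMap.ker (ad K g X) ⊓ LinearMap.ker (ad K g Y) :=
    Submodule.span_le.2 <| Set.range_subset_iff.2 fun i => ⟨hvX i, hvY i⟩
  have hY : Y ∉ Submodule.span K (Set.range v) := fun hY => hXY (hspan hY).1
  have hX : X ∉ Submodule.span K (Set.range (Fin.cons Y v : Fin (n + 1) → g)) := by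
    rw [Fin.range_cons, Submodule.mem_span_insert]
    rintro ⟨a, z, hz, rfl⟩
    apply hXY
    rw [add_lie, smul_lie, lie_self, smul_zero, zero_add, ← lie_skew]
    exact neg_eq_zero.2 (hspan hz).2
  exact linearIndependent_finCons.2 ⟨linearIndependent_finCons.2 ⟨hv, hY⟩, hX⟩

lemma lie_mem_center_of_lie_lie_eq_zero (hnil : ∀ X Y Z : g, ⁅⁅X, Y⁆, Z⁆ = 0) (X Y : g) :
    ⁅X, Y⁆ ∈ center K g :=
  (LieModule.mem_maxTrivSubmodule K g g _).2 fun Z => by rw [← lie_skew, hnil, neg_zero]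

lemma lie_mem_span_lie_of_finrank_eq_four (h4 : finrank K g = 4)
    (hnil : ∀ X Y Z : g, ⁅⁅X, Y⁆, Z⁆ = 0) {X Y : g} (hXY : ⁅X, Y⁆ ≠ 0) (U V : g) :
    ⁅U, V⁆ ∈ K ∙ ⁅X, Y⁆ := by
  by_contra hUV
  have hcentral := lie_mem_center_of_lie_lie_eq_zero (K := K) hnil
  have hli : LinearIndependent K ![X, Y, ⁅U, V⁆, ⁅X, Y⁆] := by
    refine linearIndependent_cons_cons_of_lie_ne_zero hXY
      (LinearIndependent.pair_symm_iff.1 <| (LinearIndependent.pair_iff' hXY).2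
        fun a h => hUV (Submodule.mem_span_singleton.2 ⟨a, h⟩)) ?_ ?_ <;>
    exact Fin.forall_fin_two.2 ⟨(LieModule.mem_maxTrivSubmodule K g g _).1 (hcentral U V) _,
      (LieModule.mem_maxTrivSubmodule K g g _).1 (hcentral X Y) _⟩
  let b := basisOfLinearIndependentOfCardEqFinrank hli (by simp [h4])
  have hb : ⇑b = ![X, Y, ⁅U, V⁆, ⁅X, Y⁆] := coe_basisOfLinearIndependentOfCardEqFinrank hli _
  have := lie_eq_smul_lie_of_mem_center b (by simpa [hb] using hcentral U V)
    (by simpa [hb] using hcentral X Y) U V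
  simp only [hb] at this
  exact hUV (Submodule.mem_span_singleton.2 ⟨_, this.symm⟩)

lemma exists_lie_eq_zero_notMem_span [FiniteDimensional K g] (h4 : 4 ≤ finrank K g) {W : g}
    (hline : ∀ U V : g, ⁅U, V⁆ ∈ K ∙ W) (X Y : g) :
    ∃ Z, ⁅X, Z⁆ = 0 ∧ ⁅Y, Z⁆ = 0 ∧ Z ∉ K ∙ W := by
  let f : g →ₗ[K] g × g := (ad K g X).prod (ad K g Y)
  let s : K × K →ₗ[K] g × g :=
    (LinearMap.toSpanSingleton K g W).prodMap (LinearMap.toSpanSingleton K g W)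
  have hrange : LinearMap.range f ≤ LinearMap.range s := by
    rintro _ ⟨Z, rfl⟩
    obtain ⟨a, ha⟩ := Submodule.mem_span_singleton.1 (hline X Z)
    obtain ⟨c, hc⟩ := Submodule.mem_span_singleton.1 (hline Y Z)
    exact ⟨(a, c), by simp [f, s, ha, hc]⟩
  have hker : 2 ≤ finrank K (LinearMap.ker f) := by
    have hrank := LinearMap.finrank_range_add_finrank_ker f
    have hs := (Submodule.finrank_mono hrange).trans (LinearMap.finrank_range_le s)
    rw [finrank_prod, finrank_self] at hs
    omega
  have hnot : ¬ LinearMap.ker f ≤ K ∙ W := fun hle => by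
    have := (Submodule.finrank_mono hle).trans (finrank_span_le_card ({W} : Set g))
    rw [Set.toFinset_singleton, Finset.card_singleton] at this
    omega
  obtain ⟨Z, hZ, hZW⟩ := SetLike.not_le_iff_exists.1 hnot
  simp only [f, LinearMap.mem_ker, LinearMap.prod_apply, Function.prod, Prod.mk_eq_zero,
    ad_apply] at hZ
  exact ⟨Z, hZ.1, hZ.2, hZW⟩

lemma IsTwoStepNilpotent.exists_basis [FiniteDimensional K g] (h2 : IsTwoStepNilpotent g)
    (h4 : finrank K g = 4) :
    ∃ b : Basis (Fin 4) K g, ⁅b 0, b 1⁆ = b 3 ∧ b 2 ∈ center K g ∧ b 3 ∈ center K g := by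
  obtain ⟨hnil, X, Y, hXY⟩ := h2
  have hW := lie_mem_center_of_lie_lie_eq_zero (K := K) hnil X Y
  rw [LieModule.mem_maxTrivSubmodule] at hW
  obtain ⟨Z, hXZ, hYZ, hZ⟩ := exists_lie_eq_zero_notMem_span h4.ge
    (lie_mem_span_lie_of_finrank_eq_four h4 hnil hXY) X Y
  have hli : LinearIndependent K ![X, Y, Z, ⁅X, Y⁆] :=
    linearIndependent_cons_cons_of_lie_ne_zero hXY
      (LinearIndependent.pair_symm_iff.1 <| (LinearIndependent.pair_iff' hXY).2
        fun a h => hZ (Submodule.mem_span_singleton.2 ⟨a, h⟩))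
      (Fin.forall_fin_two.2 ⟨hXZ, hW X⟩) (Fin.forall_fin_two.2 ⟨hYZ, hW Y⟩)
  let b := basisOfLinearIndependentOfCardEqFinrank hli (by simp [h4])
  have hb : ⇑b = ![X, Y, Z, ⁅X, Y⁆] := coe_basisOfLinearIndependentOfCardEqFinrank hli _
  have hadZ : ad K g Z = 0 := b.ext fun i => by
    fin_cases i <;> simp [hb, ← lie_skew Z, hXZ, hYZ]
  refine ⟨b, by simp [hb], (LieModule.mem_maxTrivSubmodule ..).2 fun A => ?_,
    by simpa [hb, LieModule.mem_maxTrivSubmodule] using hW⟩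
  rw [show b 2 = Z by simp [hb], ← lie_skew, ← ad_apply (R := K), hadZ, LinearMap.zero_apply,
    neg_zero]

noncomputable def darbouxForm (b : Basis (Fin 4) K g) (X Y : g) : K :=
  b.repr X 0 * b.repr Y 3 - b.repr X 3 * b.repr Y 0 + b.repr X 1 * b.repr Y 2
    - b.repr X 2 * b.repr Y 1

end

lemma isSymplecticForm_darbouxForm {K g : Type*} [RCLike K] [LieRing g] [LieAlgebra K g]
    (b : Basis (Fin 4) K g) (h01 : ⁅b 0, b 1⁆ = b 3) (h2 : b 2 ∈ center K g)
    (h3 : b 3 ∈ center K g) :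
    IsSymplecticForm K g (darbouxForm b) := by
  refine ⟨fun a X Y Z => ?_, fun a X Y Z => ?_, fun X => ?_, fun X hX => ?_, fun X Y Z => ?_⟩
  · simp only [darbouxForm, map_add, map_smul, Finsupp.add_apply, Finsupp.smul_apply, smul_eq_mul]
    ring
  · simp only [darbouxForm, map_add, map_smul, Finsupp.add_apply, Finsupp.smul_apply, smul_eq_mul]
    ring
  · simp only [darbouxForm]
    ring
  · refine b.forall_coord_eq_zero_iff.1 fun i => ?_
    fin_cases i
    · simpa [darbouxForm, Finsupp.single_apply] using hX (b 3)
    · simpa [darbouxForm, Finsupp.single_apply] using hX (b 2)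
    · simpa [darbouxForm, Finsupp.single_apply] using hX (b 1)
    · simpa [darbouxForm, Finsupp.single_apply] using hX (b 0)
  -- Every bracket is a multiple of `b 3` and `θ (b 3) = -e⁰`, so the cyclic sum is a
  -- determinant with two equal columns.
  · rw [lie_eq_smul_lie_of_mem_center b h2 h3 X Y, lie_eq_smul_lie_of_mem_center b h2 h3 Y Z,
      lie_eq_smul_lie_of_mem_center b h2 h3 Z X, h01]
    simp [darbouxForm]
    ring

/-- Every 4-dimensional 2-step nilpotent Lie algebra over `K` admits a symplectic form. -/
theorem symplectic_of_fourDim_twoStep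
    (K : Type*) [RCLike K] (g : Type*) [LieRing g] [LieAlgebra K g] [FiniteDimensional K g]
    (h2 : IsTwoStepNilpotent g) (h4 : Module.finrank K g = 4) :
    ∃ θ : g → g → K, IsSymplecticForm K g θ := by
  obtain ⟨b, h01, hb2, hb3⟩ := h2.exists_basis (K := K) h4
  exact ⟨darbouxForm b, isSymplecticForm_darbouxForm b h01 hb2 hb3⟩
end

section
/- The 6-dimensional Lie algebra h₅ ⊕ K over K (K = ℝ or ℂ), the direct product of the 5-dimensional Heisenberg Lie algebra with the 1-dimensional abelian Lie algebra, admits no symplectic form. -/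
/-- The direct product `h_{2p+1} ⊕ K^m` of the `(2p+1)`-dimensional Heisenberg Lie algebra
(with basis `X_1,…,X_{2p},Z` and nonzero brackets `⁅X_{2i-1}, X_{2i}⁆ = Z`) with the
`m`-dimensional abelian Lie algebra, realized on
`((Fin p → K) × (Fin p → K)) × (K × (Fin m → K))` with bracket
`⁅(a,b,c,d), (a',b',c',d')⁆ = (0, 0, ∑ i, (a i * b' i - a' i * b i), 0)`. -/
abbrev HeisenbergAbelian (K : Type*) [RCLike K] (p m : ℕ) : Type _ :=
  ((Fin p → K) × (Fin p → K)) × (K × (Fin m → K))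

namespace HeisenbergAbelian

variable {K : Type*} [RCLike K] {p m : ℕ}

/-- The Lie bracket of `h_{2p+1} ⊕ K^m`. -/
def brak (x y : HeisenbergAbelian K p m) : HeisenbergAbelian K p m :=
  ((0, 0), (∑ i, (x.1.1 i * y.1.2 i - y.1.1 i * x.1.2 i), 0))

instance (priority := 5000) : LieRing (HeisenbergAbelian K p m) where
  bracket := brak
  add_lie x y z := by
    show brak (x + y) z = brak x z + brak y z
    simp only [brak, Prod.fst_add, Prod.snd_add, Pi.add_apply, Prod.mk_add_mk, add_zero,
      Prod.mk.injEq, true_and, and_true, ← Finset.sum_add_distrib]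
    exact Finset.sum_congr rfl fun i _ => by ring
  lie_add x y z := by
    show brak x (y + z) = brak x y + brak x z
    simp only [brak, Prod.fst_add, Prod.snd_add, Pi.add_apply, Prod.mk_add_mk, add_zero,
      Prod.mk.injEq, true_and, and_true, ← Finset.sum_add_distrib]
    exact Finset.sum_congr rfl fun i _ => by ring
  lie_self x := by
    show brak x x = 0
    simp only [brak, sub_self, Finset.sum_const_zero]
    rfl
  leibniz_lie x y z := by
    show brak x (brak y z) = brak (brak x y) z + brak y (brak x z)
    simp only [brak, Prod.mk_add_mk, Prod.mk.injEq, Pi.zero_apply, mul_zero, zero_mul,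
      sub_self, Finset.sum_const_zero, add_zero, zero_add, and_true, true_and]

instance (priority := 5000) : LieAlgebra K (HeisenbergAbelian K p m) where
  lie_smul t x y := by
    show brak x (t • y) = t • brak x y
    simp only [brak, Prod.smul_fst, Prod.smul_snd, Pi.smul_apply, Prod.smul_mk, smul_zero,
      smul_eq_mul, Prod.mk.injEq, true_and, and_true, Finset.mul_sum]
    exact Finset.sum_congr rfl fun i _ => by ring

end HeisenbergAbelian

/-- The 6-dimensional Lie algebra `h₅ ⊕ K`, the direct product of the 5-dimensional
Heisenberg Lie algebra with the 1-dimensional abelian Lie algebra, admits no symplectic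
form. -/
theorem heisenberg_five_prod_abelian_not_symplectic (K : Type*) [RCLike K] :
    ¬ ∃ θ : HeisenbergAbelian K 2 1 → HeisenbergAbelian K 2 1 → K,
        IsSymplecticForm K (HeisenbergAbelian K 2 1) θ := by
  rintro ⟨θ, hl, hr, halt, hnd, hcl⟩
  have hz2 : (![0,0] : Fin 2 → K) = 0 := by funext i; fin_cases i <;> rfl
  have hz1 : (![0] : Fin 1 → K) = 0 := by funext i; fin_cases i <;> rfl
  set A1 : HeisenbergAbelian K 2 1 := ((![1,0], ![0,0]), (0, ![0])) with hA1
  set A2 : HeisenbergAbelian K 2 1 := ((![0,1], ![0,0]), (0, ![0])) with hA2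
  set B1 : HeisenbergAbelian K 2 1 := ((![0,0], ![1,0]), (0, ![0])) with hB1
  set B2 : HeisenbergAbelian K 2 1 := ((![0,0], ![0,1]), (0, ![0])) with hB2
  set e  : HeisenbergAbelian K 2 1 := ((![0,0], ![0,0]), (1, ![0])) with he
  set w  : HeisenbergAbelian K 2 1 := ((![0,0], ![0,0]), (0, ![1])) with hw
  have hbrak : ∀ x y : HeisenbergAbelian K 2 1,
      ⁅x, y⁆ = ((0, 0), (x.1.1 0 * y.1.2 0 - y.1.1 0 * x.1.2 0
        + (x.1.1 1 * y.1.2 1 - y.1.1 1 * x.1.2 1), 0)) := by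
    intro x y
    show HeisenbergAbelian.brak x y = _
    simp only [HeisenbergAbelian.brak, Fin.sum_univ_two, Prod.mk.injEq, and_true, true_and]
    try ring
  have hzl : ∀ Y, θ 0 Y = 0 := by
    intro Y
    have := hl (-1) Y Y Y
    simpa using this
  have hzr : ∀ X, θ X 0 = 0 := by
    intro X
    have := hr (-1) X X X
    simpa using this
  have key : ∀ U V T : HeisenbergAbelian K 2 1, ⁅U, V⁆ = e → ⁅V, T⁆ = 0 → ⁅T, U⁆ = 0 →
      θ e T = 0 := by
    intro U V T h1 h2 h3
    have := hcl U V T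
    rw [h1, h2, h3, hzl, hzl] at this
    simpa using this
  have hb1 : ⁅A1, B1⁆ = e := by rw [hbrak]; simp [hA1, hB1, he, hz2, hz1]
  have hb2 : ⁅A2, B2⁆ = e := by rw [hbrak]; simp [hA2, hB2, he, hz2, hz1]
  have hθA1 : θ e A1 = 0 := key A2 B2 A1 hb2
    (by rw [hbrak]; simp [hA1, hB2, hz2, hz1])
    (by rw [hbrak]; simp [hA1, hA2, hz2, hz1])
  have hθA2 : θ e A2 = 0 := key A1 B1 A2 hb1
    (by rw [hbrak]; simp [hA2, hB1, hz2, hz1])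
    (by rw [hbrak]; simp [hA1, hA2, hz2, hz1])
  have hθB1 : θ e B1 = 0 := key A2 B2 B1 hb2
    (by rw [hbrak]; simp [hB1, hB2, hz2, hz1])
    (by rw [hbrak]; simp [hA2, hB1, hz2, hz1])
  have hθB2 : θ e B2 = 0 := key A1 B1 B2 hb1
    (by rw [hbrak]; simp [hB1, hB2, hz2, hz1])
    (by rw [hbrak]; simp [hA1, hB2, hz2, hz1])
  have hθe : θ e e = 0 := halt e
  have hθw : θ e w = 0 := key A1 B1 w hb1
    (by rw [hbrak]; simp [hw, hB1, hz2, hz1])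
    (by rw [hbrak]; simp [hA1, hw, hz2, hz1])
  have hvanish : ∀ Y, θ e Y = 0 := by
    intro Y
    have hdecomp : Y = Y.1.1 0 • A1 + (Y.1.1 1 • A2 + (Y.1.2 0 • B1 +
        (Y.1.2 1 • B2 + (Y.2.1 • e + (Y.2.2 0 • w + 0))))) := by
      refine Prod.ext (Prod.ext (funext fun i => ?_) (funext fun i => ?_))
        (Prod.ext ?_ (funext fun i => ?_))
      · fin_cases i <;> simp [hA1, hA2, hB1, hB2, he, hw]
      · fin_cases i <;> simp [hA1, hA2, hB1, hB2, he, hw]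
      · simp [hA1, hA2, hB1, hB2, he, hw]
      · fin_cases i <;> simp [hA1, hA2, hB1, hB2, he, hw]
    calc θ e Y = θ e (Y.1.1 0 • A1 + (Y.1.1 1 • A2 + (Y.1.2 0 • B1 +
        (Y.1.2 1 • B2 + (Y.2.1 • e + (Y.2.2 0 • w + 0)))))) := by rw [← hdecomp]
      _ = 0 := by
        rw [hr, hr, hr, hr, hr, hr, hzr, hθA1, hθA2, hθB1, hθB2, hθe, hθw]
        ring
  have he0 : e = 0 := hnd e hvanish
  have : (1 : K) = 0 := congrArg (fun x => x.2.1) he0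
  exact one_ne_zero this
end

section
/- Let h_{8,2} be the 8-dimensional Lie algebra over K (K = ℝ or ℂ) with basis X_1,…,X_8 and nonzero brackets [X_1,X_2] = X_3, [X_1,X_4] = X_5, [X_1,X_6] = X_7, [X_2,X_4] = X_7, [X_4,X_8] = X_3, [X_6,X_8] = X_5 (and those obtained by skew-symmetry). Then the 2-form θ = α_1∧α_8 + α_2∧α_7 − α_3∧α_6 + α_4∧α_5, where {α_1,…,α_8} is the dual basis, is a symplectic form on h_{8,2}; in particular h_{8,2} is symplectic. -/
/-- The 8-dimensional 2-step nilpotent Lie algebra `h_{8,2}`, realized on `Fin 8 → K`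
with basis `X_i = e_{i-1}` and nonzero brackets `⁅X₁,X₂⁆ = X₃`, `⁅X₁,X₄⁆ = X₅`,
`⁅X₁,X₆⁆ = X₇`, `⁅X₂,X₄⁆ = X₇`, `⁅X₄,X₈⁆ = X₃`, `⁅X₆,X₈⁆ = X₅` (and those obtained
by skew-symmetry). -/
abbrev H82 (K : Type*) [RCLike K] : Type _ := Fin 8 → K

namespace H82

variable {K : Type*} [RCLike K]

/-- The Lie bracket of `h_{8,2}`. -/
def brak (x y : H82 K) : H82 K := fun i =>
  if i = 2 then x 0 * y 1 - y 0 * x 1 + (x 3 * y 7 - y 3 * x 7)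
  else if i = 4 then x 0 * y 3 - y 0 * x 3 + (x 5 * y 7 - y 5 * x 7)
  else if i = 6 then x 0 * y 5 - y 0 * x 5 + (x 1 * y 3 - y 1 * x 3)
  else 0

instance (priority := 5000) : LieRing (H82 K) where
  bracket := brak
  add_lie x y z := by
    funext i
    show brak (x + y) z i = brak x z i + brak y z i
    fin_cases i <;> simp [brak] <;> ring
  lie_add x y z := by
    funext i
    show brak x (y + z) i = brak x y i + brak x z i
    fin_cases i <;> simp [brak] <;> ring
  lie_self x := by
    funext i
    show brak x x i = 0
    fin_cases i <;> simp [brak]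
  leibniz_lie x y z := by
    funext i
    show brak x (brak y z) i = brak (brak x y) z i + brak y (brak x z) i
    fin_cases i <;> simp [brak]

instance (priority := 5000) : LieAlgebra K (H82 K) where
  lie_smul t x y := by
    funext i
    show brak x (t • y) i = t * brak x y i
    fin_cases i <;> simp [brak] <;> ring

end H82

/-- The 2-form `θ = α₁∧α₈ + α₂∧α₇ − α₃∧α₆ + α₄∧α₅` on `h_{8,2}`, where `α₁,…,α₈` is the
dual basis of `X₁,…,X₈`. -/
def theta82 {K : Type*} [RCLike K] (x y : H82 K) : K :=
  (x 0 * y 7 - x 7 * y 0) + (x 1 * y 6 - x 6 * y 1) - (x 2 * y 5 - x 5 * y 2) +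
    (x 3 * y 4 - x 4 * y 3)

/-- The 2-form `θ = α₁∧α₈ + α₂∧α₇ − α₃∧α₆ + α₄∧α₅` is a symplectic form on the rigid
Lie algebra `h_{8,2}`; in particular `h_{8,2}` is symplectic. -/
theorem h82_symplectic (K : Type*) [RCLike K] :
    IsSymplecticForm K (H82 K) (theta82 (K := K)) ∧
      ∃ θ : H82 K → H82 K → K, IsSymplecticForm K (H82 K) θ := by
  have main : IsSymplecticForm K (H82 K) (theta82 (K := K)) := by
    refine ⟨?_, ?_, ?_, ?_, ?_⟩
    · intro a X Y Z; simp [theta82]; ring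
    · intro a X Y Z; simp [theta82]; ring
    · intro X; simp [theta82]; ring
    · intro X h
      funext i
      have h0 := h (Pi.single 0 1)
      have h1 := h (Pi.single 1 1)
      have h2 := h (Pi.single 2 1)
      have h3 := h (Pi.single 3 1)
      have h4 := h (Pi.single 4 1)
      have h5 := h (Pi.single 5 1)
      have h6 := h (Pi.single 6 1)
      have h7 := h (Pi.single 7 1)
      simp [theta82, Pi.single_apply] at h0 h1 h2 h3 h4 h5 h6 h7
      fin_cases i <;> simp_all
    · intro X Y Z
      show theta82 (H82.brak X Y) Z + theta82 (H82.brak Y Z) X + theta82 (H82.brak Z X) Y = 0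
      simp [theta82, H82.brak]; ring
  exact ⟨main, _, main⟩
end

section
/- An 8-dimensional 2-step nilpotent Lie algebra over K (K = ℝ or ℂ) with characteristic sequence (2,1,1,1,1,1,1) admits a symplectic form if and only if it is isomorphic to h₃ ⊕ K⁵, the direct product of the 3-dimensional Heisenberg Lie algebra with the 5-dimensional abelian Lie algebra. -/
/-- A 2-step nilpotent Lie algebra has characteristic sequence `(2,…,2,1,…,1)` with exactly
`k` twos iff the maximum of `rank (ad X) = dim ⁅X, g⁆` over `X ∈ g \ [g,g]` equals `k`. -/
def HasCharSeqTwos (K : Type*) [RCLike K] (g : Type*) [LieRing g] [LieAlgebra K g]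
    (k : ℕ) : Prop :=
  (∀ X : g, X ∉ LieAlgebra.derivedSeries K g 1 →
      Module.finrank K ↥(LinearMap.range (LieAlgebra.ad K g X)) ≤ k) ∧
  ∃ X : g, X ∉ LieAlgebra.derivedSeries K g 1 ∧
      Module.finrank K ↥(LinearMap.range (LieAlgebra.ad K g X)) = k
/-!
Since `ad A` has rank at most one for every `A` (it vanishes on the derived algebra, which is
central), any two nonzero brackets are proportional, so `⁅A, B⁆ = ω A B • Z` with
`Z = ⁅X, Y⁆ ≠ 0`. If `θ` is symplectic, closedness says `ω ∧ θ(Z, ·) = 0`, and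
`θ(Z, ·) ≠ 0` by nondegeneracy; hence `ω = θ(Z, ·) ∧ α` has rank two. Its radical is the
center, which therefore has codimension two and contains `Z`, so `g = span {X, Y} ⊕ 𝔷(g)` is
`h₃ ⊕ K⁵`. Conversely, `h₃ ⊕ K⁵` carries the symplectic form
`X₁* ∧ Z* + X₂* ∧ D₁* + D₂* ∧ D₃* + D₄* ∧ D₅*`, which pulls back along any isomorphism.
-/

theorem exists_linearEquiv_apply_eq {K V W : Type*} [Field K] [AddCommGroup V] [Module K V]
    [AddCommGroup W] [Module K W] [FiniteDimensional K V] [FiniteDimensional K W]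
    (h : Module.finrank K V = Module.finrank K W) {v : V} {w : W} (hv : v ≠ 0) (hw : w ≠ 0) :
    ∃ e : V ≃ₗ[K] W, e v = w := by
  let e₀ := LinearEquiv.ofFinrankEq V W h
  have hv' : e₀ v ≠ 0 := e₀.map_ne_zero_iff.2 hv
  obtain ⟨e₁, he₁⟩ := Submodule.exists_linearEquiv_restrict_eq
    (LinearEquiv.coord K W _ hv' ≪≫ₗ LinearEquiv.toSpanNonzeroSingleton K W w hw)
  refine ⟨e₀ ≪≫ₗ e₁, ?_⟩
  have := he₁ ⟨e₀ v, Submodule.mem_span_singleton_self _⟩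
  simpa [LinearEquiv.coord_self] using this.symm

namespace LieAlgebra

variable {K g : Type*} [Field K] [LieRing g] [LieAlgebra K g]

theorem derivedSeries_one_le_center (hnil : ∀ X Y Z : g, ⁅⁅X, Y⁆, Z⁆ = 0) :
    derivedSeries K g 1 ≤ center K g := by
  rw [derivedSeries_def, derivedSeriesOfIdeal_succ, derivedSeriesOfIdeal_zero,
    LieSubmodule.lie_le_iff]
  intro X _ Y _
  rw [LieModule.mem_maxTrivSubmodule]
  intro Z
  rw [← lie_skew, hnil, neg_zero]

theorem lie_mem_span_lie_of_finrank_range_ad_le_one [FiniteDimensional K g] {A B : g}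
    (hA : Module.finrank K (LinearMap.range (ad K g A)) ≤ 1) (hAB : ⁅A, B⁆ ≠ 0) (W : g) :
    ⁅A, W⁆ ∈ K ∙ ⁅A, B⁆ := by
  have hmem : ∀ W, ⁅A, W⁆ ∈ LinearMap.range (ad K g A) := fun W => ⟨W, rfl⟩
  have : K ∙ ⁅A, B⁆ = LinearMap.range (ad K g A) :=
    Submodule.eq_of_le_of_finrank_le ((Submodule.span_singleton_le_iff_mem _ _).2 (hmem B))
      (by rwa [finrank_span_singleton hAB])
  exact this ▸ hmem W

theorem lie_mem_span_lie_of_forall_finrank_range_ad_le_one [FiniteDimensional K g]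
    (h : ∀ A : g, Module.finrank K (LinearMap.range (ad K g A)) ≤ 1) {X Y : g} (hXY : ⁅X, Y⁆ ≠ 0)
    (A B : g) : ⁅A, B⁆ ∈ K ∙ ⁅X, Y⁆ := by
  have hXB : ⁅X, B⁆ ∈ K ∙ ⁅X, Y⁆ := lie_mem_span_lie_of_finrank_range_ad_le_one (h X) hXY B
  have hAY : ⁅A, Y⁆ ∈ K ∙ ⁅X, Y⁆ := by
    have hYX : ⁅Y, X⁆ ≠ 0 := by rwa [← lie_skew, neg_ne_zero]
    obtain ⟨a, ha⟩ := Submodule.mem_span_singleton.1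
      (lie_mem_span_lie_of_finrank_range_ad_le_one (h Y) hYX A)
    exact Submodule.mem_span_singleton.2
      ⟨a, by rw [← lie_skew A Y, ← ha, ← lie_skew X Y]; module⟩
  by_cases hAY0 : ⁅A, Y⁆ = 0
  · have hXAY : ⁅X + A, Y⁆ ≠ 0 := by rwa [add_lie, hAY0, add_zero]
    have := lie_mem_span_lie_of_finrank_range_ad_le_one (h (X + A)) hXAY B
    rw [add_lie, hAY0, add_zero, add_lie] at this
    simpa using Submodule.sub_mem _ this hXB
  · exact (Submodule.span_singleton_le_iff_mem _ _).2 hAY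
      (lie_mem_span_lie_of_finrank_range_ad_le_one (h A) hAY0 B)

theorem eq_zero_of_smul_add_smul_mem_center {X Y : g} (hXY : ⁅X, Y⁆ ≠ 0) {a b : K}
    (h : a • X + b • Y ∈ center K g) : a = 0 ∧ b = 0 := by
  rw [LieModule.mem_maxTrivSubmodule] at h
  have hX := h X
  have hY := h Y
  rw [← lie_skew] at hY
  simp only [lie_add, lie_smul, add_lie, smul_lie, lie_self, smul_zero, zero_add, add_zero,
    neg_eq_zero, smul_eq_zero, hXY, or_false] at hX hY
  exact ⟨hY, hX⟩

theorem span_pair_sup_center_eq_top {X Y : g} (hXY : ⁅X, Y⁆ ≠ 0) {ω : g → g → K} {f α : g → K}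
    (hω : ∀ A B, ⁅A, B⁆ = ω A B • ⁅X, Y⁆) (hf : ∀ A B, ω A B = f A * α B - f B * α A) :
    Submodule.span K {X, Y} ⊔ (center K g).toSubmodule = ⊤ := by
  have hXY1 : ω X Y = 1 := smul_left_injective K hXY (by simp only [← hω, one_smul])
  refine eq_top_iff.2 fun x _ => ?_
  rw [← add_sub_cancel (ω x Y • X - ω x X • Y) x]
  refine Submodule.add_mem_sup (Submodule.mem_span_pair.2 ⟨ω x Y, -ω x X, by module⟩) ?_
  rw [LieSubmodule.mem_toSubmodule, LieModule.mem_maxTrivSubmodule]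
  intro y
  rw [lie_sub, lie_sub, lie_smul, lie_smul, hω y x, hω y X, hω y Y, smul_smul, smul_smul,
    ← sub_smul, ← sub_smul]
  refine smul_eq_zero_of_left ?_ _
  -- the Plücker relation `ω ∧ ω = 0` of the decomposable form `ω = f ∧ α`, with `ω X Y = 1`
  simp only [hf] at hXY1 ⊢
  linear_combination (f x * α y - f y * α x) * hXY1

theorem finrank_center_add_two [FiniteDimensional K g] {X Y : g} (hXY : ⁅X, Y⁆ ≠ 0)
    (hsup : Submodule.span K {X, Y} ⊔ (center K g).toSubmodule = ⊤) :
    Module.finrank K (center K g) + 2 = Module.finrank K g := by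
  have hind : LinearIndependent K ![X, Y] := LinearIndependent.pair_iff.2 fun s t hst =>
    eq_zero_of_smul_add_smul_mem_center hXY (hst ▸ zero_mem _)
  have hspan : Module.finrank K (Submodule.span K {X, Y}) = 2 := by
    rw [← Matrix.range_cons_cons_empty X Y ![], finrank_span_eq_card hind, Fintype.card_fin]
  have hinf : Submodule.span K {X, Y} ⊓ (center K g).toSubmodule = ⊥ := by
    refine eq_bot_iff.2 fun x ⟨hxU, hxc⟩ => ?_
    obtain ⟨a, b, rfl⟩ := Submodule.mem_span_pair.1 hxU
    obtain ⟨rfl, rfl⟩ := eq_zero_of_smul_add_smul_mem_center hXY hxc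
    simp
  have := Submodule.finrank_sup_add_finrank_inf_eq (Submodule.span K {X, Y})
    (center K g).toSubmodule
  rw [hsup, hinf, finrank_top, finrank_bot, hspan] at this
  change Module.finrank K (center K g).toSubmodule + 2 = _
  omega

end LieAlgebra

section

variable {K g : Type*} [RCLike K] [LieRing g] [LieAlgebra K g]

theorem HasCharSeqTwos.finrank_range_ad_le {k : ℕ} (hc : HasCharSeqTwos K g k)
    (hnil : ∀ X Y Z : g, ⁅⁅X, Y⁆, Z⁆ = 0) (A : g) :
    Module.finrank K (LinearMap.range (LieAlgebra.ad K g A)) ≤ k := by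
  by_cases hA : A ∈ LieAlgebra.derivedSeries K g 1
  · have hcen := (LieModule.mem_maxTrivSubmodule K g g A).1
      (LieAlgebra.derivedSeries_one_le_center hnil hA)
    have : LinearMap.range (LieAlgebra.ad K g A) = ⊥ :=
      LinearMap.range_eq_bot.2 <| LinearMap.ext fun W => by
        rw [LieAlgebra.ad_apply, ← lie_skew, hcen, neg_zero, LinearMap.zero_apply]
    rw [this, finrank_bot]
    exact Nat.zero_le k
  · exact hc.1 A hA

theorem IsSymplecticForm.smul_left {θ : g → g → K} (hθ : IsSymplecticForm K g θ) (a : K)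
    (X W : g) : θ (a • X) W = a * θ X W := by
  have hzero : θ 0 W = 0 := by simpa using hθ.1 1 0 0 W
  simpa [hzero] using hθ.1 a X 0 W

theorem IsSymplecticForm.exists_eq_wedge {θ : g → g → K} (hθ : IsSymplecticForm K g θ) {Z : g}
    (hZ : Z ≠ 0) {ω : g → g → K} (hω : ∀ A B, ⁅A, B⁆ = ω A B • Z) :
    ∃ f α : g → K, ∀ A B, ω A B = f A * α B - f B * α A := by
  obtain ⟨W, hW⟩ : ∃ W, θ Z W ≠ 0 := by
    by_contra! h
    exact hZ (hθ.2.2.2.1 Z h)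
  have hskew : ∀ A B, ω B A = -ω A B := fun A B =>
    smul_left_injective K hZ <| by simp only [neg_smul, ← hω]; exact (lie_skew B A).symm
  have hclosed : ∀ A B, ω A B * θ Z W + ω B W * θ Z A + ω W A * θ Z B = 0 := fun A B => by
    simpa only [hω, hθ.smul_left] using hθ.2.2.2.2 A B W
  refine ⟨θ Z, fun B => ω W B / θ Z W, fun A B => ?_⟩
  field_simp
  linear_combination hclosed A B - θ Z A * hskew W B

theorem IsSymplecticForm.comp {g' : Type*} [LieRing g'] [LieAlgebra K g'] {θ : g' → g' → K}
    (hθ : IsSymplecticForm K g' θ) (e : g ≃ₗ⁅K⁆ g') :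
    IsSymplecticForm K g (fun X Y => θ (e X) (e Y)) := by
  obtain ⟨hlin_left, hlin_right, halt, hnondeg, hclosed⟩ := hθ
  refine ⟨fun a X Y Z => ?_, fun a X Y Z => ?_, fun X => halt _, fun X hX => ?_,
    fun X Y Z => ?_⟩
  · simpa only [map_add, map_smul] using hlin_left a (e X) (e Y) (e Z)
  · simpa only [map_add, map_smul] using hlin_right a (e X) (e Y) (e Z)
  · refine e.injective ((hnondeg _ fun Y => ?_).trans e.map_zero.symm)
    simpa using hX (e.symm Y)
  · simpa only [LieEquiv.map_lie] using hclosed (e X) (e Y) (e Z)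

end

namespace HeisenbergAbelian

variable {K : Type*} [RCLike K]

theorem lie_def {m : ℕ} (x y : HeisenbergAbelian K 1 m) :
    ⁅x, y⁆ = ((0, 0), (x.1.1 0 * y.1.2 0 - y.1.1 0 * x.1.2 0, 0)) := by
  show brak x y = _
  simp [brak]

theorem nonempty_lieEquiv_of_finrank_center {m : ℕ} {g : Type*} [LieRing g] [LieAlgebra K g]
    [FiniteDimensional K g] (hg : Module.finrank K g = m + 3)
    (hc : Module.finrank K (LieAlgebra.center K g) = m + 1) {X Y : g} (hXY : ⁅X, Y⁆ ≠ 0)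
    (hZ : ⁅X, Y⁆ ∈ LieAlgebra.center K g) :
    Nonempty (g ≃ₗ⁅K⁆ HeisenbergAbelian K 1 m) := by
  obtain ⟨ψ, hψ⟩ := exists_linearEquiv_apply_eq (K := K) (v := ((1 : K), (0 : Fin m → K)))
    (w := (⟨⁅X, Y⁆, hZ⟩ : LieAlgebra.center K g)) (by simp [hc, add_comm]) (by simp)
    (by simpa using hXY)
  have hψZ : ∀ t : K, (ψ (t, 0) : g) = t • ⁅X, Y⁆ := fun t => by
    rw [show ((t, 0) : K × (Fin m → K)) = t • (1, 0) by simp, map_smul, hψ]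
    rfl
  have lie_ψ : ∀ (v : g) (w : K × (Fin m → K)), ⁅v, (ψ w : g)⁆ = 0 := fun v w =>
    (LieModule.mem_maxTrivSubmodule K g g _).1 (ψ w).2 v
  have ψ_lie : ∀ (w : K × (Fin m → K)) (v : g), ⁅(ψ w : g), v⁆ = 0 := fun w v => by
    rw [← lie_skew, lie_ψ, neg_zero]
  let φ : HeisenbergAbelian K 1 m →ₗ⁅K⁆ g :=
    { toFun := fun x => x.1.1 0 • X + x.1.2 0 • Y + ψ x.2
      map_add' := fun x y => by
        simp only [Prod.fst_add, Prod.snd_add, Pi.add_apply, map_add, LieSubmodule.coe_add]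
        module
      map_smul' := fun t x => by
        simp only [Prod.smul_fst, Prod.smul_snd, Pi.smul_apply, map_smul, LieSubmodule.coe_smul,
          RingHom.id_apply]
        module
      map_lie' := fun {x y} => by
        simp only [lie_def, hψZ, lie_add, add_lie, lie_smul, smul_lie, lie_ψ, ψ_lie, lie_self,
          ← lie_skew Y X, Pi.zero_apply]
        module }
  have hinj : Function.Injective φ := by
    refine (injective_iff_map_eq_zero φ).2 fun x hx => ?_
    change x.1.1 0 • X + x.1.2 0 • Y + ψ x.2 = 0 at hx
    have hcen : x.1.1 0 • X + x.1.2 0 • Y ∈ LieAlgebra.center K g := by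
      rw [eq_neg_of_add_eq_zero_left hx]
      exact neg_mem (ψ x.2).2
    obtain ⟨ha, hb⟩ := LieAlgebra.eq_zero_of_smul_add_smul_mem_center hXY hcen
    rw [ha, hb, zero_smul, zero_smul, zero_add, zero_add] at hx
    have hx₂ : x.2 = 0 := ψ.map_eq_zero_iff.1 (Subtype.ext hx)
    refine Prod.ext (Prod.ext ?_ ?_) hx₂ <;> ext i <;> rwa [Subsingleton.elim i 0]
  have hsurj : Function.Surjective φ :=
    (LinearMap.injective_iff_surjective_of_finrank_eq_finrank
      (f := (φ : HeisenbergAbelian K 1 m →ₗ[K] g)) (by simp [hg]; omega)).1 hinj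
  exact ⟨(LieEquiv.ofBijective φ ⟨hinj, hsurj⟩).symm⟩

def symplecticForm (x y : HeisenbergAbelian K 1 5) : K :=
  x.1.1 0 * y.2.1 - y.1.1 0 * x.2.1 + x.1.2 0 * y.2.2 0 - y.1.2 0 * x.2.2 0
    + x.2.2 1 * y.2.2 2 - y.2.2 1 * x.2.2 2 + x.2.2 3 * y.2.2 4 - y.2.2 3 * x.2.2 4

theorem isSymplecticForm_symplecticForm :
    IsSymplecticForm K (HeisenbergAbelian K 1 5) symplecticForm := by
  refine ⟨fun a X Y Z => ?_, fun a X Y Z => ?_, fun X => ?_, fun X hX => ?_, fun X Y Z => ?_⟩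
  · simp only [symplecticForm, Prod.fst_add, Prod.snd_add, Prod.smul_fst, Prod.smul_snd,
      Pi.add_apply, Pi.smul_apply, smul_eq_mul]
    ring
  · simp only [symplecticForm, Prod.fst_add, Prod.snd_add, Prod.smul_fst, Prod.smul_snd,
      Pi.add_apply, Pi.smul_apply, smul_eq_mul]
    ring
  · simp only [symplecticForm]
    ring
  · refine Prod.ext (Prod.ext (funext fun i => ?_) (funext fun i => ?_))
      (Prod.ext ?_ (funext fun i => ?_)) <;> try fin_cases i
    · simpa [symplecticForm] using hX ((0, 0), (1, 0))
    · simpa [symplecticForm] using hX ((0, 0), (0, Pi.single 0 1))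
    · simpa [symplecticForm] using hX ((1, 0), 0)
    · simpa [symplecticForm] using hX ((0, 1), 0)
    · simpa [symplecticForm] using hX ((0, 0), (0, Pi.single 2 1))
    · simpa [symplecticForm] using hX ((0, 0), (0, Pi.single 1 1))
    · simpa [symplecticForm] using hX ((0, 0), (0, Pi.single 4 1))
    · simpa [symplecticForm] using hX ((0, 0), (0, Pi.single 3 1))
  · simp only [lie_def, symplecticForm, Pi.zero_apply]
    ring

end HeisenbergAbelian

/-- An 8-dimensional 2-step nilpotent Lie algebra over `K` with characteristic sequence
`(2,1,1,1,1,1,1)` admits a symplectic form if and only if it is isomorphic to `h₃ ⊕ K⁵`,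
the direct product of the 3-dimensional Heisenberg Lie algebra with the 5-dimensional
abelian Lie algebra. -/
theorem eightDim_charSeq16_symplectic_iff
    (K : Type*) [RCLike K] (g : Type*) [LieRing g] [LieAlgebra K g] [FiniteDimensional K g]
    (h2 : IsTwoStepNilpotent g) (h8 : Module.finrank K g = 8)
    (hc : HasCharSeqTwos K g 1) :
    (∃ θ : g → g → K, IsSymplecticForm K g θ) ↔
      Nonempty (g ≃ₗ⁅K⁆ HeisenbergAbelian K 1 5) := by
  obtain ⟨hnil, X, Y, hXY⟩ := h2
  constructor
  · rintro ⟨θ, hθ⟩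
    have hspan := LieAlgebra.lie_mem_span_lie_of_forall_finrank_range_ad_le_one
      (hc.finrank_range_ad_le hnil) hXY
    obtain ⟨ω, hω⟩ : ∃ ω : g → g → K, ∀ A B, ⁅A, B⁆ = ω A B • ⁅X, Y⁆ := by
      choose ω hω using fun A B => Submodule.mem_span_singleton.1 (hspan A B)
      exact ⟨ω, fun A B => (hω A B).symm⟩
    obtain ⟨f, α, hf⟩ := hθ.exists_eq_wedge hXY hω
    have hcenter := LieAlgebra.finrank_center_add_two hXY
      (LieAlgebra.span_pair_sup_center_eq_top hXY hω hf)
    have hZ : ⁅X, Y⁆ ∈ LieAlgebra.center K g :=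
      (LieModule.mem_maxTrivSubmodule K g g _).2 fun A => by rw [← lie_skew, hnil, neg_zero]
    exact HeisenbergAbelian.nonempty_lieEquiv_of_finrank_center (by omega) (by omega) hXY hZ
  · rintro ⟨e⟩
    exact ⟨_, HeisenbergAbelian.isSymplecticForm_symplecticForm.comp e⟩
end
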